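/- For every universal tower 𝒯 = {Φ_1,…,Φ_m} in a neighbourly 2m-polytope P (m > 1) with at least 2m+3 vertices, there exists a point x̄ ∈ ℝ^{2m} that lies exactly beyond 𝒞(𝒯), i.e. x̄ is beyond every facet of P in 𝒞(𝒯) and beneath every facet of P not in 𝒞(𝒯). -/

import Mathlib

open Set

noncomputable section

/-- `Euc N` is the Euclidean space `ℝ^N`. -/
abbrev Euc (N : ℕ) : Type := EuclideanSpace ℝ (Fin N)

/-- A polytope is the convex hull of a finite point set. -/
def IsPolytope {N : ℕ} (P : Set (Euc N)) : Prop :=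
  ∃ V : Set (Euc N), V.Finite ∧ P = convexHull ℝ V

-- The dimension of a set: the dimension of its affine hull (with `pdim ∅ = -1`).
open Classical in
def pdim {N : ℕ} (A : Set (Euc N)) : ℤ :=
  if A = ∅ then -1 else (Module.finrank ℝ (affineSpan ℝ A).direction : ℤ)

/-- The vertex set of a polytope: its extreme points. -/
def verts {N : ℕ} (P : Set (Euc N)) : Set (Euc N) :=
  P.extremePoints ℝ

/-- A proper face of `P`: the intersection of `P` with a supporting hyperplane. -/
def IsProperFace {N : ℕ} (P F : Set (Euc N)) : Prop :=
  ∃ (l : Euc N →ₗ[ℝ] ℝ) (c : ℝ), l ≠ 0 ∧ (∀ x ∈ P, l x ≤ c) ∧ (∃ x ∈ P, l x = c) ∧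
    F = {x | x ∈ P ∧ l x = c}

/-- A face of `P`, where the improper faces `∅` and `P` itself are also counted as faces. -/
def IsFaceOf {N : ℕ} (P F : Set (Euc N)) : Prop :=
  F = ∅ ∨ F = P ∨ IsProperFace P F

/-- Membership in the boundary complex `𝓑(P)` (all proper faces together with `∅`). -/
def MemBoundary {N : ℕ} (P F : Set (Euc N)) : Prop :=
  F = ∅ ∨ IsProperFace P F

/-- `F` is a `k`-dimensional (proper) face of `P`. -/
def IsFaceOfDim {N : ℕ} (P F : Set (Euc N)) (k : ℤ) : Prop :=
  IsProperFace P F ∧ pdim F = k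

/-- A facet of a `d`-polytope `P` is a `(d-1)`-face. -/
def IsFacet {N : ℕ} (d : ℕ) (P F : Set (Euc N)) : Prop :=
  IsFaceOfDim P F ((d : ℤ) - 1)

/-- `P` is `k`-neighbourly: every `k` of its vertices form the vertex set of a proper face. -/
def IsKNeighbourly {N : ℕ} (P : Set (Euc N)) (k : ℕ) : Prop :=
  ∀ S ⊆ verts P, S.ncard = k → ∃ F, IsProperFace P F ∧ verts F = S

/-- `P` is a neighbourly `d`-polytope: a `d`-dimensional `⌊d/2⌋`-neighbourly polytope. -/
def IsNeighbourly {N : ℕ} (d : ℕ) (P : Set (Euc N)) : Prop :=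
  IsPolytope P ∧ pdim P = (d : ℤ) ∧ IsKNeighbourly P (d / 2)

/-- `U` is a universal `k`-face of the `d`-polytope `P`:
`conv (S ∪ U)` is a face of `P` for every `S ⊆ 𝒱(P)` with `|S| ≤ ⌊(d-k-1)/2⌋`. -/
def IsUniversalFace {N : ℕ} (d : ℕ) (P U : Set (Euc N)) (k : ℕ) : Prop :=
  IsFaceOfDim P U (k : ℤ) ∧
  ∀ S ⊆ verts P, S.ncard ≤ (d - k - 1) / 2 →
    IsProperFace P (convexHull ℝ (S ∪ U))

/-- `z` is beyond the facet `F` of `P`: the supporting hyperplane of `F` separates `z` from `P`. -/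
def Beyond {N : ℕ} (P F : Set (Euc N)) (z : Euc N) : Prop :=
  ∃ (l : Euc N →ₗ[ℝ] ℝ) (c : ℝ), l ≠ 0 ∧ (∀ x ∈ P, l x ≤ c) ∧
    F = {x | x ∈ P ∧ l x = c} ∧ c < l z

/-- `z` is beneath the facet `F` of `P`: `z` lies on the same open side of `aff F` as `P`. -/
def Beneath {N : ℕ} (P F : Set (Euc N)) (z : Euc N) : Prop :=
  ∃ (l : Euc N →ₗ[ℝ] ℝ) (c : ℝ), l ≠ 0 ∧ (∀ x ∈ P, l x ≤ c) ∧
    F = {x | x ∈ P ∧ l x = c} ∧ l z < c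

/-- `Phi x y j = Φ_j = conv {x_1, y_1, …, x_j, y_j}` (1-indexed; `Phi x y 0 = ∅`). -/
def Phi {N m : ℕ} (x y : Fin m → Euc N) (j : ℕ) : Set (Euc N) :=
  convexHull ℝ {p | ∃ i : Fin m, (i : ℕ) < j ∧ (p = x i ∨ p = y i)}

/-- `𝒯 = {Φ_1, …, Φ_m}` is a universal tower in `P`: the `x_i, y_i` are distinct vertices of `P`
and `Φ_j` is a universal `(2j-1)`-face of `P` for `1 ≤ j ≤ m`. -/
def IsUniversalTower {N : ℕ} (m : ℕ) (P : Set (Euc N)) (x y : Fin m → Euc N) : Prop :=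
  Function.Injective (Sum.elim x y) ∧
  (∀ i, x i ∈ verts P) ∧ (∀ i, y i ∈ verts P) ∧
  ∀ j, 1 ≤ j → j ≤ m → IsUniversalFace (2 * m) P (Phi x y j) (2 * j - 1)

/-- `F ∈ 𝒞(𝒯) = (𝓕_1∖𝓕_2) ∪ (𝓕_3∖𝓕_4) ∪ ⋯` where `𝓕_i` is the set of facets containing `Φ_i`
(with `𝓕_j = ∅` for `j > m`). -/
def InSewC {N : ℕ} (m : ℕ) (x y : Fin m → Euc N) (F : Set (Euc N)) : Prop :=
  ∃ i, Odd i ∧ 1 ≤ i ∧ i ≤ m ∧ Phi x y i ⊆ F ∧ (i = m ∨ ¬ Phi x y (i + 1) ⊆ F)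

/-- `z` lies exactly beyond `𝒞(𝒯)`: `z` is beyond every facet of `P` in `𝒞(𝒯)` and beneath
every facet of `P` not in `𝒞(𝒯)`. -/
def ExactlyBeyond {N : ℕ} (m : ℕ) (P : Set (Euc N)) (x y : Fin m → Euc N) (z : Euc N) : Prop :=
  ∀ F, IsFacet (2 * m) P F →
    (InSewC m x y F → Beyond P F z) ∧ (¬ InSewC m x y F → Beneath P F z)

/-- `Q` is a quotient polytope `P/G` of `P` by its face `G`, with vertex correspondence `φ`:
the face lattice of `Q` is isomorphic to the interval `{F : G ⊆ F ⊆ P}` of the face lattice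
of `P`, via vertex sets. -/
def IsQuotient {N M : ℕ} (P G : Set (Euc N)) (Q : Set (Euc M)) (φ : Euc N → Euc M) : Prop :=
  IsPolytope Q ∧ Set.BijOn φ (verts P \ verts G) (verts Q) ∧
  ∀ W ⊆ verts P \ verts G,
    ((∃ F, IsFaceOf P F ∧ G ⊆ F ∧ verts F = W ∪ verts G) ↔
     (∃ F', IsFaceOf Q F' ∧ verts F' = φ '' W))

/-- `P` and `Q` are combinatorially equivalent via the vertex bijection `ψ`:
`ψ` maps vertex sets of faces onto vertex sets of faces in both directions. -/
def CombEquiv {N M : ℕ} (P : Set (Euc N)) (Q : Set (Euc M)) (ψ : Euc N → Euc M) : Prop :=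
  Set.BijOn ψ (verts P) (verts Q) ∧
  ∀ W ⊆ verts P,
    ((∃ F, IsFaceOf P F ∧ verts F = W) ↔ (∃ F', IsFaceOf Q F' ∧ verts F' = ψ '' W))

/-- `A` is a missing face of `P` relative to the face `G`;
`IsMissingFaceRel P G` describes `ℳ(P/G)`. -/
def IsMissingFaceRel {N : ℕ} (P G A : Set (Euc N)) : Prop :=
  A ⊆ verts P \ verts G ∧
  ¬ MemBoundary P (convexHull ℝ (A ∪ G)) ∧
  ∀ A' ⊂ A, MemBoundary P (convexHull ℝ (A' ∪ G))

/-- `A ∈ ℳ(P)`, the set of missing faces of `P`. -/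
def IsMissingFace {N : ℕ} (P A : Set (Euc N)) : Prop :=
  IsMissingFaceRel P ∅ A

/-- The moment curve `t ↦ (t, t², …, t^d)` in `ℝ^d`. -/
def momentCurve (d : ℕ) (t : ℝ) : Euc d :=
  WithLp.toLp 2 (fun i : Fin d => t ^ ((i : ℕ) + 1))

/-- `C` is a cyclic `d`-polytope with `n` vertices: the convex hull of `n` distinct points
on the moment curve in `ℝ^d`. -/
def IsCyclicPolytope (d n : ℕ) (C : Set (Euc d)) : Prop :=
  ∃ t : Fin n → ℝ, Function.Injective t ∧
    C = convexHull ℝ (Set.range fun i => momentCurve d (t i)) ∧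
    (verts C).ncard = n


/-!
Sewing argument. An interior point of `P` is beneath every facet. Going down the tower, let
`p_j` be a relative-interior point of `Φ_j` (the centroid of its vertices), so that `p_j` lies on a
facet `F` exactly when `Φ_j ⊆ F`. Replacing the current point `z` by a point just past `p_j` on
the ray from `z` through `p_j` reverses the side of `z` for the facets containing `Φ_j` and
makes it beneath all the others. After `Φ_m, …, Φ_1`, a facet `F` is beyond exactly when the
number of `Φ_j` contained in `F` is odd, which is the condition `F ∈ 𝒞(𝒯)`.
-/

theorem IsPolytope.convex {N : ℕ} {P : Set (Euc N)} (h : IsPolytope P) : Convex ℝ P := by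
  obtain ⟨V, -, rfl⟩ := h
  exact convex_convexHull ℝ V

theorem isExtreme_setOf_eq_of_forall_le {E : Type*} [AddCommGroup E] [Module ℝ E] {A : Set E}
    {l : E →ₗ[ℝ] ℝ} {c : ℝ} (hle : ∀ x ∈ A, l x ≤ c) : IsExtreme ℝ A {x | x ∈ A ∧ l x = c} := by
  refine ⟨fun x hx => hx.1, ?_⟩
  rintro x₁ hx₁ x₂ hx₂ x ⟨-, hxc⟩ ⟨a, b, ha, hb, hab, rfl⟩
  have h₁ := hle x₁ hx₁
  have h₂ := hle x₂ hx₂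
  rw [map_add, map_smul, map_smul, smul_eq_mul, smul_eq_mul] at hxc
  have hac : a * c ≤ a * l x₁ := by
    have : a * c = c - b * c := by rw [eq_sub_of_add_eq hab]; ring
    linarith [mul_le_mul_of_nonneg_left h₂ hb.le]
  exact ⟨hx₁, le_antisymm h₁ (le_of_mul_le_mul_left hac ha)⟩

theorem IsPolytope.finite_setOf_isProperFace {N : ℕ} {P : Set (Euc N)} (h : IsPolytope P) :
    {F | IsProperFace P F}.Finite := by
  obtain ⟨V, hV, rfl⟩ := h
  refine (hV.finite_subsets.image (convexHull ℝ)).subset ?_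
  rintro F ⟨l, c, -, hle, -, rfl⟩
  have hcont : Continuous l := LinearMap.continuous_of_finiteDimensional l
  have hext := isExtreme_setOf_eq_of_forall_le hle
  have hcpt : IsCompact {x | x ∈ convexHull ℝ V ∧ l x = c} :=
    (hV.isCompact_convexHull ℝ).inter_right (isClosed_eq hcont continuous_const)
  refine ⟨V ∩ {x | l x = c}, Set.inter_subset_left, subset_antisymm ?_ ?_⟩
  · exact convexHull_min (fun v hv => ⟨subset_convexHull ℝ V hv.1, hv.2⟩)
      ((convex_convexHull ℝ V).inter (convex_hyperplane l.isLinear c))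
  · have hconv : Convex ℝ {x | x ∈ convexHull ℝ V ∧ l x = c} :=
      (convex_convexHull ℝ V).inter (convex_hyperplane l.isLinear c)
    rw [← closure_convexHull_extremePoints hcpt hconv]
    refine closure_minimal (convexHull_mono fun v hv => ⟨?_, (extremePoints_subset hv).2⟩)
      ((hV.subset Set.inter_subset_left).isClosed_convexHull ℝ)
    exact extremePoints_convexHull_subset (hext.extremePoints_subset_extremePoints hv)

theorem LinearMap.lt_of_mem_interior {E : Type*} [NormedAddCommGroup E] [NormedSpace ℝ E]
    [FiniteDimensional ℝ E] {s : Set E} {l : E →ₗ[ℝ] ℝ} (hl : l ≠ 0) {c : ℝ}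
    (hle : ∀ x ∈ s, l x ≤ c) {z : E} (hz : z ∈ interior s) : l z < c := by
  have hopen : IsOpenMap l := l.isOpenMap_of_finiteDimensional <|
    (l.surjective_or_eq_zero).resolve_right hl
  simpa only [interior_Iic, Set.mem_Iio] using hopen.mapsTo_interior (t := Set.Iic c) hle hz

theorem Convex.interior_nonempty_of_pdim_eq {N : ℕ} {P : Set (Euc N)} (hP : Convex ℝ P)
    (hdim : pdim P = N) : (interior P).Nonempty := by
  have hne : P ≠ ∅ := by
    rintro rfl
    simp [pdim] at hdim
  rw [pdim, if_neg hne, Nat.cast_inj] at hdim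
  rw [hP.interior_nonempty_iff_affineSpan_eq_top,
    ← AffineSubspace.direction_eq_top_iff_of_nonempty
      ((affineSpan_nonempty ℝ).mpr (Set.nonempty_iff_ne_empty.mpr hne))]
  exact Submodule.eq_top_of_finrank_eq (hdim.trans finrank_euclideanSpace_fin.symm)

theorem Set.Finite.exists_mem_convexHull_forall_eq_of_eq {E : Type*} [AddCommGroup E]
    [Module ℝ E] {A : Set E} (hA : A.Finite) (hne : A.Nonempty) :
    ∃ p ∈ convexHull ℝ A, ∀ (l : E →ₗ[ℝ] ℝ) (c : ℝ),
      (∀ a ∈ A, l a ≤ c) → l p = c → ∀ a ∈ A, l a = c := by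
  set t := hA.toFinset
  have hcard : (0 : ℝ) < t.card := by simpa [t] using hne
  have hw : ∑ _b ∈ t, (1 : ℝ) = t.card := by simp
  refine ⟨t.centerMass (fun _ => (1 : ℝ)) id, ?_, fun l c hle hp a ha => ?_⟩
  · simpa [t] using t.centerMass_mem_convexHull (fun _ _ => zero_le_one)
      (hw ▸ hcard) (fun a ha => by simpa [t] using ha)
  · have hsum : ∑ b ∈ t, (c - l b) = 0 := by
      rw [Finset.centerMass, map_smul, map_sum, hw] at hp
      simp only [one_smul, id, smul_eq_mul] at hp
      rw [Finset.sum_sub_distrib, Finset.sum_const, nsmul_eq_mul, ← hp]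
      field_simp
      ring
    have := (Finset.sum_eq_zero_iff_of_nonneg fun b hb => sub_nonneg.mpr
      (hle b (hA.mem_toFinset.mp hb))).mp hsum a (hA.mem_toFinset.mpr ha)
    linarith

open Filter Topology in
theorem exists_reflect_through {E ι : Type*} [AddCommGroup E] [Module ℝ E] {s : Set ι}
    (hs : s.Finite) (l : ι → E →ₗ[ℝ] ℝ) (c : ι → ℝ) (p z : E) :
    ∃ q : E, ∀ i ∈ s,
      (l i p = c i → (c i < l i q ↔ l i z < c i) ∧ (l i q < c i ↔ c i < l i z)) ∧
      (l i p < c i → l i q < c i) := by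
  have hsmall : ∀ᶠ ε in 𝓝[>] (0 : ℝ), 0 < ε ∧
      ∀ i ∈ s, l i p < c i → l i p + ε * (l i p - l i z) < c i := by
    refine eventually_mem_nhdsWithin.and ((hs.eventually_all).2 fun i _ => ?_)
    rw [eventually_imp_distrib_left]
    intro hlt
    have hcont : Tendsto (fun ε : ℝ => l i p + ε * (l i p - l i z)) (𝓝 0) (𝓝 (l i p)) := by
      simpa using ((tendsto_id (x := 𝓝 (0 : ℝ))).mul_const (l i p - l i z)).const_add (l i p)
    exact (tendsto_nhdsWithin_of_tendsto_nhds hcont).eventually_lt_const hlt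
  obtain ⟨ε, hε, hlt⟩ := hsmall.exists
  have hq : ∀ i, l i (p + ε • (p - z)) = l i p + ε * (l i p - l i z) := fun i => by
    rw [map_add, map_smul, map_sub, smul_eq_mul]
  refine ⟨p + ε • (p - z), fun i hi => ⟨fun heq => ?_, fun h => hq i ▸ hlt i hi h⟩⟩
  rw [hq, heq]
  constructor <;> constructor <;> intro h <;> nlinarith

theorem exists_sign_pattern_of_tower {E ι : Type*} [AddCommGroup E] [Module ℝ E] {s : Set ι}
    (hs : s.Finite) (l : ι → E →ₗ[ℝ] ℝ) (c : ι → ℝ) {z₀ : E} (hz₀ : ∀ i ∈ s, l i z₀ < c i)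
    (n : ℕ) (d : ι → ℕ) (p : ℕ → E) (hd : ∀ i ∈ s, d i ≤ n)
    (hp_eq : ∀ i ∈ s, ∀ j < d i, l i (p j) = c i)
    (hp_lt : ∀ i ∈ s, ∀ j, d i ≤ j → j < n → l i (p j) < c i) :
    ∃ z : E, ∀ i ∈ s, (Odd (d i) → c i < l i z) ∧ (¬ Odd (d i) → l i z < c i) := by
  induction n generalizing d p with
  | zero =>
    refine ⟨z₀, fun i hi => ⟨fun hodd => ?_, fun _ => hz₀ i hi⟩⟩
    have := hd i hi
    simp_all
  | succ n ih =>
    obtain ⟨z, hz⟩ := ih (fun i => d i - 1) (fun j => p (j + 1))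
      (fun i hi => by have := hd i hi; omega)
      (fun i hi j hj => hp_eq i hi (j + 1) (by omega))
      (fun i hi j hj hjn => hp_lt i hi (j + 1) (by omega) (by omega))
    obtain ⟨q, hq⟩ := exists_reflect_through hs l c (p 0) z
    refine ⟨q, fun i hi => ?_⟩
    rcases Nat.eq_zero_or_pos (d i) with hd0 | hdpos
    · have := (hq i hi).2 (hp_lt i hi 0 (by omega) (by omega))
      simp_all
    · have hpar : Odd (d i) ↔ ¬ Odd (d i - 1) := by
        simp only [Nat.odd_iff]; omega
      obtain ⟨hbeyond, hbeneath⟩ := (hq i hi).1 (hp_eq i hi 0 hdpos)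
      rw [hbeyond, hbeneath, hpar, not_not]
      exact ⟨(hz i hi).2, (hz i hi).1⟩

section Tower

open Classical

variable {N m : ℕ} (x y : Fin m → Euc N)

def towerVerts (j : ℕ) : Set (Euc N) :=
  {p | ∃ i : Fin m, (i : ℕ) < j ∧ (p = x i ∨ p = y i)}

theorem Phi_eq_convexHull_towerVerts (j : ℕ) : Phi x y j = convexHull ℝ (towerVerts x y j) :=
  rfl

theorem towerVerts_finite (j : ℕ) : (towerVerts x y j).Finite :=
  ((Set.finite_range x).union (Set.finite_range y)).subset <| by
    rintro _ ⟨i, -, rfl | rfl⟩ <;> simp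

theorem towerVerts_nonempty {j : ℕ} (hj : j < m) : (towerVerts x y (j + 1)).Nonempty :=
  ⟨x ⟨0, by omega⟩, ⟨0, by omega⟩, Nat.succ_pos j, Or.inl rfl⟩

theorem towerVerts_subset {K : Set (Euc N)} (hx : ∀ i, x i ∈ K) (hy : ∀ i, y i ∈ K) (j : ℕ) :
    towerVerts x y j ⊆ K := by
  rintro _ ⟨i, -, rfl | rfl⟩
  exacts [hx i, hy i]

theorem Phi_mono : Monotone (Phi x y) := fun _ _ h =>
  convexHull_mono fun _ ⟨i, hi, hp⟩ => ⟨i, hi.trans_le h, hp⟩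

theorem Phi_zero : Phi x y 0 = ∅ := by
  simp [Phi]

def towerDepth (F : Set (Euc N)) : ℕ :=
  Nat.findGreatest (fun j => Phi x y j ⊆ F) m

theorem towerDepth_le (F : Set (Euc N)) : towerDepth x y F ≤ m :=
  Nat.findGreatest_le m

theorem Phi_subset_iff_le_towerDepth {F : Set (Euc N)} {j : ℕ} (hj : j ≤ m) :
    Phi x y j ⊆ F ↔ j ≤ towerDepth x y F :=
  ⟨Nat.le_findGreatest (P := fun j => Phi x y j ⊆ F) hj, fun h => (Phi_mono x y h).trans <|
    Nat.findGreatest_spec (P := fun j => Phi x y j ⊆ F) (Nat.zero_le m) (by simp [Phi_zero])⟩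

theorem inSewC_iff_odd_towerDepth (F : Set (Euc N)) :
    InSewC m x y F ↔ Odd (towerDepth x y F) := by
  have hle := towerDepth_le x y F
  constructor
  · rintro ⟨i, hodd, -, him, hsub, hlast⟩
    have hi := (Phi_subset_iff_le_towerDepth x y him).1 hsub
    have : towerDepth x y F = i := by
      refine le_antisymm (not_lt.1 fun hlt => ?_) hi
      rcases hlast with rfl | hnot
      · omega
      · exact hnot ((Phi_subset_iff_le_towerDepth x y (by omega)).2 hlt)
    rwa [this]
  · intro hodd
    refine ⟨_, hodd, hodd.pos, hle, (Phi_subset_iff_le_towerDepth x y hle).2 le_rfl, ?_⟩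
    refine hle.eq_or_lt.imp id fun hlt hsub => ?_
    have := (Phi_subset_iff_le_towerDepth x y hlt).1 hsub
    omega

theorem exists_seq_eq_iff_Phi_succ_subset {P : Set (Euc N)} (hP : Convex ℝ P)
    (hx : ∀ i, x i ∈ P) (hy : ∀ i, y i ∈ P) :
    ∃ p : ℕ → Euc N, ∀ j < m, ∀ (l : Euc N →ₗ[ℝ] ℝ) (c : ℝ) (F : Set (Euc N)),
      (∀ v ∈ P, l v ≤ c) → F = {v | v ∈ P ∧ l v = c} →
        l (p j) ≤ c ∧ (l (p j) = c ↔ Phi x y (j + 1) ⊆ F) := by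
  choose! p hpΦ hp using fun j (hj : j < m) =>
    (towerVerts_finite x y (j + 1)).exists_mem_convexHull_forall_eq_of_eq
      (towerVerts_nonempty x y hj)
  have hvP := towerVerts_subset x y hx hy
  refine ⟨p, fun j hj l c F hle hF => ?_⟩
  subst hF
  have hconv : Convex ℝ {v | v ∈ P ∧ l v = c} := hP.inter (convex_hyperplane l.isLinear c)
  rw [Phi_eq_convexHull_towerVerts, hconv.convexHull_subset_iff]
  refine ⟨hle _ (hP.convexHull_subset_iff.2 (hvP _) (hpΦ j hj)), fun heq v hv => ?_,
    fun hsub => (hconv.convexHull_subset_iff.2 hsub (hpΦ j hj)).2⟩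
  exact ⟨hvP _ hv, hp j hj l c (fun a ha => hle a (hvP _ ha)) heq v hv⟩

end Tower

theorem statement_8_general {m : ℕ}
    (P : Set (Euc (2 * m))) (x y : Fin m → Euc (2 * m))
    (hP : IsNeighbourly (2 * m) P)
    (hT : IsUniversalTower m P x y) :
    ∃ xb : Euc (2 * m), ExactlyBeyond m P x y xb := by
  obtain ⟨hpoly, hdim, -⟩ := hP
  obtain ⟨-, hx, hy, -⟩ := hT
  have hfacets : {F | IsFacet (2 * m) P F}.Finite :=
    hpoly.finite_setOf_isProperFace.subset fun F hF => hF.1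
  choose! L C hL hle _ hFeq using fun F (hF : IsFacet (2 * m) P F) => hF.1
  obtain ⟨z₀, hz₀⟩ := hpoly.convex.interior_nonempty_of_pdim_eq (by exact_mod_cast hdim)
  obtain ⟨p, hp⟩ := exists_seq_eq_iff_Phi_succ_subset x y hpoly.convex
    (fun i => extremePoints_subset (hx i)) (fun i => extremePoints_subset (hy i))
  have h_on : ∀ F, IsFacet (2 * m) P F → ∀ j < towerDepth x y F, L F (p j) = C F :=
    fun F hF j hj => (hp j (by grind [towerDepth_le]) _ _ F (hle F hF) (hFeq F hF)).2.2 <|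
      (Phi_subset_iff_le_towerDepth x y (by grind [towerDepth_le])).2 hj
  have h_beneath : ∀ F, IsFacet (2 * m) P F →
      ∀ j, towerDepth x y F ≤ j → j < m → L F (p j) < C F := by
    intro F hF j hj hjm
    obtain ⟨hle_p, heq_iff⟩ := hp j hjm _ _ F (hle F hF) (hFeq F hF)
    refine hle_p.lt_of_ne fun heq => ?_
    have := (Phi_subset_iff_le_towerDepth x y hjm).1 (heq_iff.1 heq)
    omega
  obtain ⟨z, hz⟩ := exists_sign_pattern_of_tower hfacets L C
    (fun F hF => (L F).lt_of_mem_interior (hL F hF) (hle F hF) hz₀) m (towerDepth x y) p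
    (fun F _ => towerDepth_le x y F) h_on h_beneath
  refine ⟨z, fun F hF => ⟨fun hin => ?_, fun hnin => ?_⟩⟩
  · exact ⟨L F, C F, hL F hF, hle F hF, hFeq F hF,
      (hz F hF).1 ((inSewC_iff_odd_towerDepth x y F).1 hin)⟩
  · exact ⟨L F, C F, hL F hF, hle F hF, hFeq F hF,
      (hz F hF).2 (mt (inSewC_iff_odd_towerDepth x y F).2 hnin)⟩

/-- For every universal tower `𝒯` in a neighbourly `2m`-polytope `P`
(`m > 1`) with at least `2m+3` vertices, there is a point `x̄ ∈ ℝ^{2m}` lying exactly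
beyond `𝒞(𝒯)`. -/
theorem statement_8 {m : ℕ} (hm : 1 < m)
    (P : Set (Euc (2 * m))) (x y : Fin m → Euc (2 * m))
    (hP : IsNeighbourly (2 * m) P) (hcard : 2 * m + 3 ≤ (verts P).ncard)
    (hT : IsUniversalTower m P x y) :
    ∃ xb : Euc (2 * m), ExactlyBeyond m P x y xb :=
  statement_8_general P x y hP hT
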